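/- Let B be a real Banach space, q ∈ ℕ, and E ⊆ B a q-dimensional subspace. If T_n, T ∈ L(B) and T_n → T in the operator norm, then det(T_n | E) → det(T | E). -/

import Mathlib

open MeasureTheory Filter Metric Set
open scoped ENNReal NNReal Topology

namespace BanachMET

noncomputable section

/-- `ω q`: the Lebesgue volume of the Euclidean unit ball in `ℝ^q`. -/
def ballVol (q : ℕ) : ℝ≥0∞ :=
  volume (Metric.closedBall (0 : EuclideanSpace ℝ (Fin q)) 1)

/-- Extended logarithm of a real number, with the convention `log t = -∞` for `t ≤ 0`. -/
def elog (t : ℝ) : EReal := if t ≤ 0 then ⊥ else ((Real.log t : ℝ) : EReal)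

/-- Extended logarithm on `ℝ≥0∞`, with `log 0 = -∞` and `log ⊤ = ⊤`. -/
def elogE (t : ℝ≥0∞) : EReal :=
  if t = 0 then ⊥ else if t = ⊤ then ⊤ else ((Real.log t.toReal : ℝ) : EReal)

variable {B B' : Type*} [NormedAddCommGroup B] [NormedSpace ℝ B]
  [NormedAddCommGroup B'] [NormedSpace ℝ B']

section Volume
variable [MeasurableSpace B] [BorelSpace B] [MeasurableSpace B'] [BorelSpace B']

/-- The induced volume `m_E` on a finite dimensional subspace `E ⊆ B`: the unique
translation-invariant Borel measure on `E` assigning measure `ω_q` to the closed unit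
ball of `E`, where `q = dim E`.  (Junk value `0` if `E` is infinite dimensional.) -/
def inducedVolume (E : Submodule ℝ B) : Measure E := by
  classical
  exact if h : FiniteDimensional ℝ E then
    (ballVol (Module.finrank ℝ E) /
        (Module.finBasis ℝ E).addHaar (Metric.closedBall (0 : E) 1)) •
      (Module.finBasis ℝ E).addHaar
  else 0

/-- `det(A|E)`: the determinant of `A` on the finite dimensional subspace `E`,
defined as the ratio `m_{AE}(A(B_E)) / m_E(B_E)` (note `m_E(B_E) = ω_q`) if `A`
is injective on `E`, and `0` otherwise. -/
def detOn (A : B →L[ℝ] B') (E : Submodule ℝ B) : ℝ≥0∞ := by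
  classical
  exact if Set.InjOn A (E : Set B) then
    inducedVolume (E.map (A : B →ₗ[ℝ] B'))
        ((Subtype.val) ⁻¹' (A '' ((Subtype.val : E → B) '' Metric.closedBall (0 : E) 1))) /
      ballVol (Module.finrank ℝ E)
  else 0

/-- `V_q(A)`: the maximal `q`-dimensional volume growth of `A`
(with the convention `V_0(A) = 1`). -/
def maxVol (q : ℕ) (A : B →L[ℝ] B') : ℝ≥0∞ := by
  classical
  exact if q = 0 then 1 else
    ⨆ (E : Submodule ℝ B) (_ : FiniteDimensional ℝ E ∧ Module.finrank ℝ E = q), detOn A E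

end Volume

/-- The measure of noncompactness `|A|_α`. -/
def alphaMeasure (A : B →L[ℝ] B') : ℝ :=
  sInf {r : ℝ | 0 < r ∧ ∃ s : Finset B', (A '' Metric.closedBall 0 1) ⊆ ⋃ y ∈ s, Metric.ball y r}

/-- The annihilator `F° ⊆ B*` of a subspace `F ⊆ B` in the continuous dual. -/
def annih (F : Submodule ℝ B) : Submodule ℝ (B →L[ℝ] ℝ) where
  carrier := {ℓ | ∀ v ∈ F, ℓ v = 0}
  add_mem' := by
    intro a b ha hb v hv
    simp [ha v hv, hb v hv]
  zero_mem' := by intro v hv; simp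
  smul_mem' := by
    intro c ℓ h v hv
    simp [h v hv]

/-- The codimension of a subspace: the dimension of its annihilator in `B*`. -/
def codim (F : Submodule ℝ B) : ℕ := Module.finrank ℝ (annih F)

/-- `sin θ(E,F)` where `θ(E,F)` is the minimal angle from `E` to `F`. -/
def sinAngle (E F : Submodule ℝ B) : ℝ :=
  sInf {d : ℝ | ∃ e ∈ E, ‖e‖ = 1 ∧ ∃ f ∈ F, d = ‖e - f‖}

/-- The norm of the (possibly unbounded) projection onto `E` parallel to `F`. -/
def projNorm (E F : Submodule ℝ B) : ℝ :=
  sSup {r : ℝ | ∃ e ∈ E, ∃ f ∈ F, ‖e + f‖ ≤ 1 ∧ r = ‖e‖}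

/-- The Hausdorff distance `d_H` between the unit spheres of two subspaces. -/
def sphDist (E F : Submodule ℝ B) : ℝ :=
  Metric.hausdorffDist ((E : Set B) ∩ Metric.sphere (0 : B) 1)
    ((F : Set B) ∩ Metric.sphere (0 : B) 1)

/-- The gap `δ(U,V)`. -/
def gap (U V : Submodule ℝ B) : ℝ :=
  sSup {d : ℝ | ∃ u ∈ U, ‖u‖ = 1 ∧ d = Metric.infDist u (V : Set B)}

/-- `π` is the (bounded) projection onto `E` parallel to `F`. -/
def IsProjOnto (E F : Submodule ℝ B) (π : B →L[ℝ] B) : Prop :=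
  (∀ e ∈ E, π e = e) ∧ ∀ f ∈ F, π f = 0

/-- The Gelfand numbers `c_q(A)` (for `q ≥ 1`). -/
def gelfand (q : ℕ) (A : B →L[ℝ] B') : ℝ := by
  classical
  exact if q ≤ 1 then ‖A‖
  else sInf {c : ℝ | ∃ R : Submodule ℝ B, IsClosed (R : Set B) ∧ codim R = q - 1 ∧
    c = ‖A.comp R.subtypeL‖}

/-- `p` is an inner product on the subspace `E ⊆ B`. -/
structure IsInnerOn (E : Submodule ℝ B) (p : B → B → ℝ) : Prop where
  add_left : ∀ u ∈ E, ∀ v ∈ E, ∀ w ∈ E, p (u + v) w = p u w + p v w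
  smul_left : ∀ (c : ℝ), ∀ u ∈ E, ∀ v ∈ E, p (c • u) v = c * p u v
  symm : ∀ u ∈ E, ∀ v ∈ E, p u v = p v u
  posdef : ∀ u ∈ E, u ≠ 0 → 0 < p u u

/-- Iterates `T^n_x = T_{f^{n-1} x} ∘ ⋯ ∘ T_x` of the cocycle `T` over the base map `f`. -/
def iter {X : Type*} (T : X → B →L[ℝ] B) (f : X → X) : ℕ → X → B →L[ℝ] B
  | 0, _ => ContinuousLinearMap.id ℝ B
  | n + 1, x => (iter T f n (f x)).comp (T x)

/-- Uniform measurability: `T` is the pointwise norm limit of a sequence of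
finite-valued measurable maps. -/
def UniformlyMeasurable {X : Type*} [MeasurableSpace X] (T : X → B →L[ℝ] B) : Prop :=
  ∃ S : ℕ → X → B →L[ℝ] B,
    (∀ n, (Set.range (S n)).Finite) ∧
    (∀ n (A : B →L[ℝ] B), MeasurableSet {x | S n x = A}) ∧
    ∀ x, Tendsto (fun n => ‖S n x - T x‖) atTop (𝓝 0)

/-- The slow-growing set `F_λ(x)`. -/
def slowSpace {X : Type*} (T : X → B →L[ℝ] B) (f : X → X) (lam : ℝ) (x : X) : Set B :=
  {v : B | Filter.limsup (fun n : ℕ => (((n : ℝ)⁻¹ : ℝ) : EReal) * elog ‖iter T f n x v‖)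
      atTop ≤ (lam : EReal)}

/-!
For any Haar measure `μ` on `E`, `det(A|E) = μ(B_E) / μ {v ∈ E | ‖A v‖ ≤ 1}`: a ratio of Haar
measures does not depend on the Haar measure, and when `A` is not injective on `E` the sublevel
set contains infinitely many disjoint balls strung along a kernel line, so both sides vanish. It
therefore suffices that `A ↦ μ {v | ‖A v‖ ≤ 1} ∈ [0, ∞]` is continuous on `L(E, B)`. Near an
injective `A₀` we have `‖(A - A₀) v‖ ≤ δ ‖A₀ v‖` with `δ → 0`, so the sublevel set of `A` lies
between the dilates by `(1 ± δ)⁻¹` of that of `A₀`, whose volumes are `(1 ± δ)^(-dim E)` times its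
volume. Near a non-injective `A₀`, the sublevel set of `A` contains ever larger bounded pieces of
the infinite-volume set `{v | ‖A₀ v‖ ≤ 1/2}`.
-/

open scoped Pointwise

lemma ballVol_ne_zero (q : ℕ) : ballVol q ≠ 0 :=
  (measure_closedBall_pos volume _ one_pos).ne'

lemma ballVol_ne_top (q : ℕ) : ballVol q ≠ ∞ :=
  measure_closedBall_lt_top.ne

lemma addHaar_div_addHaar {G : Type*} [AddGroup G] [TopologicalSpace G] [IsTopologicalAddGroup G]
    [LocallyCompactSpace G] [SecondCountableTopology G] [MeasurableSpace G] [BorelSpace G]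
    (μ ν : Measure G) [μ.IsAddHaarMeasure] [ν.IsAddHaarMeasure] (s t : Set G) :
    ν s / ν t = μ s / μ t := by
  rw [Measure.isAddLeftInvariant_eq_smul ν μ, Measure.smul_apply, Measure.smul_apply,
    ENNReal.smul_def, ENNReal.smul_def, smul_eq_mul, smul_eq_mul]
  exact ENNReal.mul_div_mul_left _ _
    (by simpa using (Measure.addHaarScalarFactor_pos_of_isAddHaarMeasure ν μ).ne')
    ENNReal.coe_ne_top

lemma setOf_norm_le_subset_of_norm_sub_le {α W : Type*} [SeminormedAddCommGroup W]
    {f g : α → W} {δ : ℝ} (h : ∀ a, ‖f a - g a‖ ≤ δ * ‖g a‖) (hδ : δ < 1) :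
    {a | ‖f a‖ ≤ 1} ⊆ {a | ‖g a‖ ≤ (1 - δ)⁻¹} := fun a (ha : ‖f a‖ ≤ 1) => by
  show ‖g a‖ ≤ (1 - δ)⁻¹
  rw [← one_div, le_div_iff₀ (by linarith)]
  nlinarith [norm_sub_norm_le (g a) (f a), norm_sub_rev (g a) (f a), h a]

lemma subset_setOf_norm_le_of_norm_sub_le {α W : Type*} [SeminormedAddCommGroup W]
    {f g : α → W} {δ : ℝ} (h : ∀ a, ‖f a - g a‖ ≤ δ * ‖g a‖) (hδ : 0 ≤ δ) :
    {a | ‖g a‖ ≤ (1 + δ)⁻¹} ⊆ {a | ‖f a‖ ≤ 1} := fun a (ha : ‖g a‖ ≤ (1 + δ)⁻¹) => by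
  rw [← one_div, le_div_iff₀ (by linarith)] at ha
  show ‖f a‖ ≤ 1
  nlinarith [norm_sub_norm_le (f a) (g a), h a]

section SublevelVolume

variable {V W : Type*} [NormedAddCommGroup V] [NormedSpace ℝ V] [NormedAddCommGroup W]
  [NormedSpace ℝ W]

lemma setOf_norm_le_eq_smul (A : V →L[ℝ] W) {s : ℝ} (hs : 0 < s) :
    {v | ‖A v‖ ≤ s} = s • {v | ‖A v‖ ≤ 1} := by
  ext v
  rw [Set.mem_smul_set_iff_inv_smul_mem₀ hs.ne', mem_ofPred_eq, mem_ofPred_eq, map_smul, norm_smul,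
    norm_inv, Real.norm_of_nonneg hs.le, inv_mul_le_iff₀ hs, mul_one]

variable [MeasurableSpace V] [BorelSpace V] (μ : Measure V) [μ.IsAddHaarMeasure]

lemma addHaar_setOf_norm_le_eq_top {A : V →L[ℝ] W} (hA : ¬ Function.Injective A) {t : ℝ}
    (ht : 0 < t) : μ {v | ‖A v‖ ≤ t} = ∞ := by
  obtain ⟨k, hAk, hk⟩ : ∃ k, A k = 0 ∧ k ≠ 0 := by
    simpa [injective_iff_map_eq_zero] using hA
  set r := min (‖k‖ / 2) (t / (‖A‖ + 1))
  have hr : 0 < r := lt_min (by positivity) (by positivity)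
  have hdisj :
      Pairwise fun m m' : ℕ => Disjoint (ball ((m : ℝ) • k) r) (ball ((m' : ℝ) • k) r) := by
    intro m m' hmm'
    apply ball_disjoint_ball
    rw [dist_eq_norm, ← sub_smul, norm_smul, Real.norm_eq_abs]
    have : (1 : ℝ) ≤ |(m : ℝ) - m'| := by
      have := Int.one_le_abs (sub_ne_zero.2 (Nat.cast_injective.ne hmm' : (m : ℤ) ≠ m'))
      exact_mod_cast this
    calc r + r ≤ ‖k‖ := by linarith [min_le_left (‖k‖ / 2) (t / (‖A‖ + 1))]
      _ ≤ |(m : ℝ) - m'| * ‖k‖ := le_mul_of_one_le_left (norm_nonneg _) this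
  have hsub : (⋃ m : ℕ, ball ((m : ℝ) • k) r) ⊆ {v | ‖A v‖ ≤ t} := by
    simp only [iUnion_subset_iff]
    intro m v hv
    rw [mem_ball, dist_eq_norm] at hv
    calc ‖A v‖ = ‖A (v - (m : ℝ) • k)‖ := by simp [hAk]
      _ ≤ ‖A‖ * r := (A.le_opNorm _).trans (by gcongr)
      _ ≤ (‖A‖ + 1) * (t / (‖A‖ + 1)) := by gcongr; linarith; exact min_le_right _ _
      _ = t := by field_simp
  refine top_unique ((measure_mono hsub).trans' ?_)
  rw [measure_iUnion hdisj fun _ => measurableSet_ball]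
  simp [Measure.addHaar_ball_center, (measure_ball_pos μ _ hr).ne']

variable {ι : Type*} {l : Filter ι} {A : ι → V →L[ℝ] W} {A₀ : V →L[ℝ] W}

lemma tendsto_addHaar_setOf_norm_le_of_not_injective (hA : Tendsto A l (𝓝 A₀))
    (hA₀ : ¬ Function.Injective A₀) :
    Tendsto (fun i => μ {v | ‖A i v‖ ≤ 1}) l (𝓝 ∞) := by
  set S := {v | ‖A₀ v‖ ≤ 1 / 2}
  have hcover : Tendsto (fun ρ : ℕ => μ (S ∩ closedBall 0 ρ)) atTop (𝓝 ∞) := by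
    have := tendsto_measure_iUnion_atTop (μ := μ) (s := fun ρ : ℕ => S ∩ closedBall 0 ρ)
      fun a b hab =>
        inter_subset_inter_right _ (closedBall_subset_closedBall (by exact_mod_cast hab))
    rwa [← inter_iUnion, iUnion_closedBall_nat, inter_univ,
      addHaar_setOf_norm_le_eq_top μ hA₀ (by norm_num)] at this
  refine ENNReal.tendsto_nhds_top fun M => ?_
  obtain ⟨ρ, hρ⟩ := (hcover.eventually_const_lt (ENNReal.natCast_lt_top M)).exists
  have hsmall : ∀ᶠ i in l, ‖A i - A₀‖ * ρ < 1 / 2 := by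
    have := (tendsto_iff_norm_sub_tendsto_zero.1 hA).mul_const (ρ : ℝ)
    rw [zero_mul] at this
    exact this.eventually_lt_const (by norm_num)
  filter_upwards [hsmall] with i hi
  refine hρ.trans_le (measure_mono fun v ⟨(hv : ‖A₀ v‖ ≤ 1 / 2), hvρ⟩ => ?_)
  rw [mem_closedBall_zero_iff] at hvρ
  calc ‖A i v‖ ≤ ‖A₀ v‖ + ‖(A i - A₀) v‖ := by
        simpa using norm_le_norm_add_norm_sub' (A i v) (A₀ v)
    _ ≤ 1 / 2 + ‖A i - A₀‖ * ρ := by gcongr; exact (A i - A₀).le_opNorm_of_le hvρ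
    _ ≤ 1 := by linarith

variable [FiniteDimensional ℝ V]

lemma addHaar_setOf_norm_le (A : V →L[ℝ] W) {s : ℝ} (hs : 0 < s) :
    μ {v | ‖A v‖ ≤ s} = ENNReal.ofReal (s ^ Module.finrank ℝ V) * μ {v | ‖A v‖ ≤ 1} := by
  rw [setOf_norm_le_eq_smul A hs, Measure.addHaar_smul, abs_of_pos (pow_pos hs _)]

lemma tendsto_addHaar_setOf_norm_le_of_tendsto_one (A : V →L[ℝ] W) {s : ι → ℝ}
    (hs : Tendsto s l (𝓝 1)) :
    Tendsto (fun i => μ {v | ‖A v‖ ≤ s i}) l (𝓝 (μ {v | ‖A v‖ ≤ 1})) := by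
  have hpow : Tendsto (fun i => ENNReal.ofReal (s i ^ Module.finrank ℝ V)) l (𝓝 1) := by
    simpa using ENNReal.tendsto_ofReal (hs.pow _)
  have := ENNReal.Tendsto.mul_const hpow (Or.inl one_ne_zero) (b := μ {v | ‖A v‖ ≤ 1})
  rw [one_mul] at this
  refine this.congr' ?_
  filter_upwards [hs.eventually_const_lt one_pos] with i hi
  exact (addHaar_setOf_norm_le μ A hi).symm

lemma tendsto_addHaar_setOf_norm_le_of_injective (hA : Tendsto A l (𝓝 A₀))
    (hA₀ : Function.Injective A₀) :
    Tendsto (fun i => μ {v | ‖A i v‖ ≤ 1}) l (𝓝 (μ {v | ‖A₀ v‖ ≤ 1})) := by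
  obtain ⟨K, -, hK⟩ := (A₀ : V →ₗ[ℝ] W).exists_antilipschitzWith (LinearMap.ker_eq_bot.2 hA₀)
  set δ := fun i => K * ‖A i - A₀‖
  have hδ : Tendsto δ l (𝓝 0) := by
    simpa using (tendsto_iff_norm_sub_tendsto_zero.1 hA).const_mul (K : ℝ)
  have hδA : ∀ i v, ‖A i v - A₀ v‖ ≤ δ i * ‖A₀ v‖ := fun i v =>
    calc ‖A i v - A₀ v‖ ≤ ‖A i - A₀‖ * ‖v‖ := (A i - A₀).le_opNorm v
      _ ≤ ‖A i - A₀‖ * (K * ‖A₀ v‖) := by gcongr; exact hK.le_mul_norm (map_zero _) v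
      _ = δ i * ‖A₀ v‖ := by ring
  have hlower := tendsto_addHaar_setOf_norm_le_of_tendsto_one μ A₀
    (by simpa using (hδ.const_add 1).inv₀ (by norm_num) : Tendsto (fun i => (1 + δ i)⁻¹) l (𝓝 1))
  have hupper := tendsto_addHaar_setOf_norm_le_of_tendsto_one μ A₀
    (by simpa using (hδ.const_sub 1).inv₀ (by norm_num) : Tendsto (fun i => (1 - δ i)⁻¹) l (𝓝 1))
  refine tendsto_of_tendsto_of_tendsto_of_le_of_le' hlower hupper ?_ ?_
  · exact Eventually.of_forall fun i =>
      measure_mono (subset_setOf_norm_le_of_norm_sub_le (hδA i) (by positivity))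
  · filter_upwards [hδ.eventually_lt_const one_pos] with i hi
    exact measure_mono (setOf_norm_le_subset_of_norm_sub_le (hδA i) hi)

theorem tendsto_addHaar_setOf_norm_le (hA : Tendsto A l (𝓝 A₀)) :
    Tendsto (fun i => μ {v | ‖A i v‖ ≤ 1}) l (𝓝 (μ {v | ‖A₀ v‖ ≤ 1})) := by
  by_cases hA₀ : Function.Injective A₀
  · exact tendsto_addHaar_setOf_norm_le_of_injective μ hA hA₀
  · rw [addHaar_setOf_norm_le_eq_top μ hA₀ one_pos]
    exact tendsto_addHaar_setOf_norm_le_of_not_injective μ hA hA₀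

end SublevelVolume

def equivMapOfInjOn (A : B →L[ℝ] B') (E : Submodule ℝ B) (hA : InjOn A E) :
    E ≃ₗ[ℝ] E.map (A : B →ₗ[ℝ] B') :=
  (LinearEquiv.ofInjective ((A : B →ₗ[ℝ] B') ∘ₗ E.subtype)
    fun u v huv => Subtype.ext (hA u.2 v.2 huv)).trans
      (LinearEquiv.ofEq _ _ (by rw [LinearMap.range_comp, Submodule.range_subtype]))

theorem detOn_eq_div [MeasurableSpace B] [BorelSpace B] [MeasurableSpace B'] [BorelSpace B']
    (A : B →L[ℝ] B') (E : Submodule ℝ B) [FiniteDimensional ℝ E]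
    (μ : Measure E) [μ.IsAddHaarMeasure] :
    detOn A E = μ (closedBall 0 1) / μ {v | ‖A v‖ ≤ 1} := by
  by_cases hA : InjOn A E
  swap
  · have hA' : ¬ Function.Injective (A.comp E.subtypeL) := fun h =>
      hA fun u hu v hv huv => congrArg Subtype.val (@h ⟨u, hu⟩ ⟨v, hv⟩ huv)
    have htop : μ {v : E | ‖A v‖ ≤ 1} = ∞ := addHaar_setOf_norm_le_eq_top μ hA' one_pos
    rw [detOn, if_neg hA, htop, ENNReal.div_top]
  set F := E.map (A : B →ₗ[ℝ] B')
  set e := equivMapOfInjOn A E hA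
  have : FiniteDimensional ℝ F := e.finiteDimensional
  set Φ : F ≃L[ℝ] E := e.symm.toContinuousLinearEquiv
  have hΦ : ∀ g : F, A (Φ g) = (g : B') := fun g => congrArg Subtype.val (e.apply_symm_apply g)
  have hball : closedBall (0 : F) 1 = Φ ⁻¹' {v | ‖A v‖ ≤ 1} := by
    ext g
    rw [mem_closedBall_zero_iff, mem_preimage, mem_ofPred_eq, hΦ]
    rfl
  have himage : ((↑) ⁻¹' (A '' ((↑) '' closedBall (0 : E) 1)) : Set F) =
      Φ ⁻¹' closedBall 0 1 := by
    ext g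
    constructor
    · rintro ⟨_, ⟨v, hv, rfl⟩, hg⟩
      have : g = e v := Subtype.ext hg.symm
      simpa [Φ, this] using hv
    · exact fun hg => ⟨Φ g, ⟨Φ g, hg, rfl⟩, hΦ g⟩
  set ν := (Module.finBasis ℝ F).addHaar
  have hν : ∀ s, ν (Φ ⁻¹' s) = ν.map Φ s := fun s =>
    (Φ.toHomeomorph.toMeasurableEquiv.map_apply s).symm
  rw [detOn, if_pos hA, inducedVolume, dif_pos ‹_›, Measure.smul_apply, smul_eq_mul, himage,
    hball, hν, hν, ← e.finrank_eq, ← addHaar_div_addHaar μ (ν.map Φ)]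
  set a := ballVol (Module.finrank ℝ E)
  calc a / ν.map Φ {v | ‖A v‖ ≤ 1} * ν.map Φ (closedBall 0 1) / a
      = ν.map Φ (closedBall 0 1) / ν.map Φ {v | ‖A v‖ ≤ 1} * (a / a) := by
        simp only [div_eq_mul_inv]; ring
    _ = _ := by rw [ENNReal.div_self (ballVol_ne_zero _) (ballVol_ne_top _), mul_one]

theorem statement15_general
    {B : Type*} [NormedAddCommGroup B] [NormedSpace ℝ B]
    [MeasurableSpace B] [BorelSpace B]
    (E : Submodule ℝ B) [FiniteDimensional ℝ E]
    (Tn : ℕ → B →L[ℝ] B) (T : B →L[ℝ] B)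
    (hconv : Tendsto (fun n => ‖Tn n - T‖) atTop (𝓝 0)) :
    Tendsto (fun n => detOn (Tn n) E) atTop (𝓝 (detOn T E)) := by
  have hrestrict : Tendsto (fun n => (Tn n).comp E.subtypeL) atTop (𝓝 (T.comp E.subtypeL)) :=
    ((continuous_id.clm_comp continuous_const).tendsto T).comp
      (tendsto_iff_norm_sub_tendsto_zero.2 hconv)
  simp only [detOn_eq_div _ E Measure.addHaar]
  exact ENNReal.Tendsto.const_div (tendsto_addHaar_setOf_norm_le _ hrestrict)
    (Or.inr measure_closedBall_lt_top.ne)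

theorem statement15
    {B : Type*} [NormedAddCommGroup B] [NormedSpace ℝ B] [CompleteSpace B]
    [MeasurableSpace B] [BorelSpace B]
    (q : ℕ) (E : Submodule ℝ B) [FiniteDimensional ℝ E] (hE : Module.finrank ℝ E = q)
    (Tn : ℕ → B →L[ℝ] B) (T : B →L[ℝ] B)
    (hconv : Tendsto (fun n => ‖Tn n - T‖) atTop (𝓝 0)) :
    Tendsto (fun n => detOn (Tn n) E) atTop (𝓝 (detOn T E)) :=
  statement15_general E Tn T hconv

end
end BanachMET
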